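/- Let C ⊆ F_2^n be a binary linear code of dimension k ≥ 1. For a nonzero codeword set, define c_α as the minimum, over all sets of α distinct nonzero codewords of C, of the cardinality of the union of their supports; and for 1 ≤ r ≤ k define the r-th generalized Hamming weight d_r as the minimum cardinality of the support χ(A) = {i : ∃ a ∈ A, a_i ≠ 0} over all r-dimensional linear subcodes A of C. Then for every integer i ≥ 0 and every integer α with 2^i ≤ α ≤ min(2^{i+1} − 1, 2^k − 1), we have c_α = d_{i+1}. -/

import Mathlib

open scoped Classical


/-- The number of coordinates which are nonzero in some element of `A`. -/
noncomputable def supportCard {n : ℕ} (A : Set (Fin n → ZMod 2)) : ℕ :=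
  (Finset.univ.filter fun i => ∃ x ∈ A, x i ≠ 0).card

/-- `cHam C a` is the minimum, over all sets of `a` distinct nonzero codewords
of `C`, of the number of coordinates which are nonzero in at least one of
these `a` codewords (the minimum `a`-Hamming covering of `C`). -/
noncomputable def cHam {n : ℕ} (C : Submodule (ZMod 2) (Fin n → ZMod 2)) (a : ℕ) : ℕ :=
  sInf {m | ∃ S : Finset (Fin n → ZMod 2),
    ↑S ⊆ (C : Set (Fin n → ZMod 2)) \ {0} ∧ S.card = a ∧
      supportCard (↑S : Set (Fin n → ZMod 2)) = m}

/-- `dHam C r` is the `r`-th generalized Hamming weight of `C`: the minimum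
support size of an `r`-dimensional linear subcode of `C`. -/
noncomputable def dHam {n : ℕ} (C : Submodule (ZMod 2) (Fin n → ZMod 2)) (r : ℕ) : ℕ :=
  sInf {m | ∃ A : Submodule (ZMod 2) (Fin n → ZMod 2),
    A ≤ C ∧ Module.finrank (ZMod 2) A = r ∧
      supportCard (↑A : Set (Fin n → ZMod 2)) = m}

/-! A set of `a ≥ 2^i` nonzero codewords spans a subcode of dimension at least `i + 1`, whose
support is no larger than that of the set; conversely, an `(i+1)`-dimensional subcode has
`2^(i+1) - 1 ≥ a` nonzero codewords, any `a` of which have support inside the subcode's. -/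

theorem Submodule.exists_le_finrank_eq {K V : Type*} [DivisionRing K] [AddCommGroup V]
    [Module K V] (W : Submodule K V) {r : ℕ} (hr : r ≤ Module.finrank K W) :
    ∃ A : Submodule K V, A ≤ W ∧ Module.finrank K A = r := by
  obtain ⟨f, hf⟩ := exists_linearIndependent_of_le_finrank hr
  refine ⟨Submodule.span K (Set.range (W.subtype ∘ f)), ?_, ?_⟩
  · rw [Submodule.span_le]
    rintro _ ⟨j, rfl⟩
    exact (f j).2
  · rw [finrank_span_eq_card (hf.map' W.subtype W.ker_subtype), Fintype.card_fin]

section FiniteField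

variable {K V : Type*} [Field K] [Finite K] [AddCommGroup V] [Module K V]

theorem Submodule.exists_finset_subset_diff_zero_card_eq (W : Submodule K V)
    [Module.Finite K W] {a : ℕ} (ha : a < Nat.card K ^ Module.finrank K W) :
    ∃ S : Finset V, ↑S ⊆ (W : Set V) \ {0} ∧ S.card = a := by
  have : Finite W := Module.finite_of_finite K
  have hW : ((W : Set V) \ {0}).Finite := (Set.toFinite (W : Set V)).sdiff
  have hcard : hW.toFinset.card = Nat.card K ^ Module.finrank K W - 1 := by
    rw [← Set.ncard_eq_toFinset_card _ hW, Set.ncard_sdiff_singleton_of_mem W.zero_mem,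
      ← Nat.card_coe_set_eq, SetLike.coe_sort_coe, Module.natCard_eq_pow_finrank (K := K)]
  obtain ⟨S, hS, rfl⟩ := Finset.exists_subset_card_eq (s := hW.toFinset) (n := a) (by omega)
  exact ⟨S, by simpa using hS, rfl⟩

theorem Finset.card_lt_pow_finrank_span {S : Finset V} (h0 : (0 : V) ∉ S) :
    S.card < Nat.card K ^ Module.finrank K (Submodule.span K (S : Set V)) := by
  have hsub : insert 0 (S : Set V) ⊆ Submodule.span K (S : Set V) :=
    Set.insert_subset (Submodule.zero_mem _) Submodule.subset_span
  have : Finite (Submodule.span K (S : Set V)) := Module.finite_of_finite K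
  have := Set.ncard_le_ncard hsub (Set.toFinite _)
  rwa [Set.ncard_insert_of_notMem h0, Set.ncard_coe_finset, ← Nat.card_coe_set_eq,
    SetLike.coe_sort_coe, Module.natCard_eq_pow_finrank (K := K), Nat.add_one_le_iff] at this

end FiniteField

theorem exists_mem_apply_ne_zero_of_mem_span {R ι : Type*} [Semiring R] {S : Set (ι → R)}
    {x : ι → R} (hx : x ∈ Submodule.span R S) {i : ι} (hxi : x i ≠ 0) :
    ∃ s ∈ S, s i ≠ 0 := by
  by_contra! h
  exact hxi ((Submodule.span_le (p := LinearMap.ker (LinearMap.proj i))).2 h hx)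

section Code

variable {n : ℕ}

theorem supportCard_mono {A B : Set (Fin n → ZMod 2)} (h : A ⊆ B) :
    supportCard A ≤ supportCard B :=
  Finset.card_le_card fun i hi => by
    obtain ⟨x, hx, hxi⟩ := (Finset.mem_filter.1 hi).2
    exact Finset.mem_filter.2 ⟨Finset.mem_univ i, x, h hx, hxi⟩

theorem supportCard_span_le (S : Set (Fin n → ZMod 2)) :
    supportCard (Submodule.span (ZMod 2) S : Set (Fin n → ZMod 2)) ≤ supportCard S :=
  Finset.card_le_card fun i hi => by
    obtain ⟨x, hx, hxi⟩ := (Finset.mem_filter.1 hi).2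
    exact Finset.mem_filter.2 ⟨Finset.mem_univ i, exists_mem_apply_ne_zero_of_mem_span hx hxi⟩

variable {C : Submodule (ZMod 2) (Fin n → ZMod 2)}

theorem cHam_le_supportCard {S : Finset (Fin n → ZMod 2)}
    (hS : ↑S ⊆ (C : Set (Fin n → ZMod 2)) \ {0}) :
    cHam C S.card ≤ supportCard (S : Set (Fin n → ZMod 2)) :=
  Nat.sInf_le ⟨S, hS, rfl, rfl⟩

theorem dHam_le_supportCard {A : Submodule (ZMod 2) (Fin n → ZMod 2)} (hA : A ≤ C) :
    dHam C (Module.finrank (ZMod 2) A) ≤ supportCard (A : Set (Fin n → ZMod 2)) :=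
  Nat.sInf_le ⟨A, hA, rfl, rfl⟩

theorem exists_supportCard_eq_cHam {a : ℕ} (ha : a < 2 ^ Module.finrank (ZMod 2) C) :
    ∃ S : Finset (Fin n → ZMod 2), ↑S ⊆ (C : Set (Fin n → ZMod 2)) \ {0} ∧ S.card = a ∧
      supportCard (S : Set (Fin n → ZMod 2)) = cHam C a := by
  obtain ⟨S, hS, rfl⟩ := C.exists_finset_subset_diff_zero_card_eq (by rwa [Nat.card_zmod])
  exact Nat.sInf_mem (s := {m | ∃ T : Finset (Fin n → ZMod 2),
    ↑T ⊆ (C : Set (Fin n → ZMod 2)) \ {0} ∧ T.card = S.card ∧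
      supportCard (T : Set (Fin n → ZMod 2)) = m}) ⟨_, S, hS, rfl, rfl⟩

theorem exists_supportCard_eq_dHam {r : ℕ} (hr : r ≤ Module.finrank (ZMod 2) C) :
    ∃ A : Submodule (ZMod 2) (Fin n → ZMod 2), A ≤ C ∧ Module.finrank (ZMod 2) A = r ∧
      supportCard (A : Set (Fin n → ZMod 2)) = dHam C r := by
  obtain ⟨A, hA, rfl⟩ := C.exists_le_finrank_eq hr
  exact Nat.sInf_mem (s := {m | ∃ B : Submodule (ZMod 2) (Fin n → ZMod 2),
    B ≤ C ∧ Module.finrank (ZMod 2) B = Module.finrank (ZMod 2) A ∧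
      supportCard (B : Set (Fin n → ZMod 2)) = m}) ⟨_, A, hA, rfl, rfl⟩

theorem cHam_le_dHam {a r : ℕ} (hr : r ≤ Module.finrank (ZMod 2) C) (ha : a < 2 ^ r) :
    cHam C a ≤ dHam C r := by
  obtain ⟨A, hAC, rfl, hA⟩ := exists_supportCard_eq_dHam hr
  obtain ⟨S, hSA, rfl⟩ := A.exists_finset_subset_diff_zero_card_eq (by rwa [Nat.card_zmod])
  have hSC : ↑S ⊆ (C : Set (Fin n → ZMod 2)) \ {0} := fun x hx => ⟨hAC (hSA hx).1, (hSA hx).2⟩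
  calc cHam C S.card ≤ supportCard (S : Set (Fin n → ZMod 2)) := cHam_le_supportCard hSC
    _ ≤ supportCard (A : Set (Fin n → ZMod 2)) := supportCard_mono fun x hx => (hSA hx).1
    _ = _ := hA

theorem dHam_le_cHam {a i : ℕ} (hi : 2 ^ i ≤ a) (ha : a < 2 ^ Module.finrank (ZMod 2) C) :
    dHam C (i + 1) ≤ cHam C a := by
  obtain ⟨S, hSC, rfl, hS⟩ := exists_supportCard_eq_cHam ha
  set W := Submodule.span (ZMod 2) (S : Set (Fin n → ZMod 2))
  have hWC : W ≤ C := Submodule.span_le.2 fun x hx => (hSC hx).1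
  have hW : i + 1 ≤ Module.finrank (ZMod 2) W := by
    have := Finset.card_lt_pow_finrank_span (K := ZMod 2) fun h => (hSC h).2 rfl
    rw [Nat.card_zmod] at this
    exact (Nat.pow_lt_pow_iff_right one_lt_two).1 (hi.trans_lt this)
  obtain ⟨A, hAW, hA⟩ := W.exists_le_finrank_eq hW
  calc dHam C (i + 1) ≤ supportCard (A : Set (Fin n → ZMod 2)) :=
        hA ▸ dHam_le_supportCard (hAW.trans hWC)
    _ ≤ supportCard (W : Set (Fin n → ZMod 2)) := supportCard_mono hAW
    _ ≤ supportCard (S : Set (Fin n → ZMod 2)) := supportCard_span_le _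
    _ = _ := hS

end Code

theorem stmt19_general {n k : ℕ}
    (C : Submodule (ZMod 2) (Fin n → ZMod 2))
    (hC : Module.finrank (ZMod 2) C = k)
    (i a : ℕ) (h1 : 2 ^ i ≤ a) (h2 : a ≤ min (2 ^ (i + 1) - 1) (2 ^ k - 1)) :
    cHam C a = dHam C (i + 1) := by
  subst hC
  have ha_code : a < 2 ^ Module.finrank (ZMod 2) C := by
    have := Nat.one_le_two_pow (n := Module.finrank (ZMod 2) C); omega
  have ha_dim : a < 2 ^ (i + 1) := by
    have := Nat.one_le_two_pow (n := i + 1); omega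
  have hi : i + 1 ≤ Module.finrank (ZMod 2) C :=
    (Nat.pow_lt_pow_iff_right one_lt_two).1 (h1.trans_lt ha_code)
  exact le_antisymm (cHam_le_dHam hi ha_dim) (dHam_le_cHam h1 ha_code)

/-- For a binary linear code `C` of dimension `k ≥ 1`, for every `i ≥ 0` and
every `a` with `2^i ≤ a ≤ min (2^{i+1} - 1) (2^k - 1)`, the minimum
`a`-Hamming covering equals the `(i+1)`-st generalized Hamming weight:
`c_a = d_{i+1}`. -/
theorem stmt19 {n k : ℕ} (hk : 1 ≤ k)
    (C : Submodule (ZMod 2) (Fin n → ZMod 2))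
    (hC : Module.finrank (ZMod 2) C = k)
    (i a : ℕ) (h1 : 2 ^ i ≤ a) (h2 : a ≤ min (2 ^ (i + 1) - 1) (2 ^ k - 1)) :
    cHam C a = dHam C (i + 1) :=
  stmt19_general C hC i a h1 h2
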